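/- Let G be a profinite group with a p-Sylow subgroup S, let φ: G → H be a surjective continuous homomorphism with kernel K a pro-p' group, let P be a closed subgroup of S and Q = φ(P). Then φ restricts to an isomorphism ψ: P → Q, and the map sending an automorphism α of P induced by conjugation by N_G(P) to ψ⁻¹αψ is an isomorphism from the group of automorphisms of P induced by N_G(P) onto the group of automorphisms of Q induced by N_H(Q). -/

import Mathlib

/-- A topological group is pro-`p` if its quotient by every open normal subgroup is a
`p`-group. -/
def IsProPGroup (p : ℕ) (G : Type*) [Group G] [TopologicalSpace G] : Prop :=
  ∀ (N : Subgroup G) (hN : N.Normal), IsOpen (N : Set G) →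
    letI := hN
    IsPGroup p (G ⧸ N)

/-- A topological group is pro-`p'` if in its quotient by every open normal subgroup no
element has order divisible by `p`. -/
def IsProPPrimeGroup (p : ℕ) (G : Type*) [Group G] [TopologicalSpace G] : Prop :=
  ∀ (N : Subgroup G) (hN : N.Normal), IsOpen (N : Set G) →
    letI := hN
    ∀ g : G ⧸ N, ¬ p ∣ orderOf g

/-!
An element of `P ∩ ker φ` has, modulo every open normal subgroup, both `p`-power order and order
prime to `p`, so it is trivial and `φ` is injective on `P`. The content of the theorem is that `φ`
maps `N_G(P)` onto `N_H(φ P)`. If `φ g` normalizes `φ P`, then `g P g⁻¹ ≤ P K`. In a finite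
quotient `G / N` the images of `P` and `g P g⁻¹` are `p`-subgroups of the same order of `P K / N`,
in which the image of `P` is Sylow; Sylow's theorem then gives `k ∈ K` such that `k g` normalizes
`P N`. For fixed `g` these `k` form nonempty closed sets, directed as `N` shrinks, so by compactness
one `k` works for every `N`; since `P` is closed, `k g` normalizes `P`, and `φ (k g) = φ g`.
-/

open Subgroup

theorem eq_one_of_pow_prime_pow_eq_one_of_not_dvd_orderOf {M : Type*} [Monoid M] {p n : ℕ}
    (hp : p.Prime) {y : M} (hy : y ^ p ^ n = 1) (hyp : ¬ p ∣ orderOf y) : y = 1 :=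
  orderOf_eq_one_iff.mp <| Nat.Coprime.eq_one_of_dvd
    ((hp.coprime_iff_not_dvd.mpr hyp).symm.pow_right n) (orderOf_dvd_of_pow_eq_one hy)

namespace Subgroup

variable {G : Type*} [Group G]

theorem map_map_conj {H : Type*} [Group H] (f : G →* H) (g : G) (A : Subgroup G) :
    (A.map (MulAut.conj g).toMonoidHom).map f = (A.map f).map (MulAut.conj (f g)).toMonoidHom := by
  simp only [map_map]
  congr 1
  ext x
  simp

theorem map_conj_mul (a b : G) (A : Subgroup G) :
    A.map (MulAut.conj (a * b)).toMonoidHom =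
      (A.map (MulAut.conj b).toMonoidHom).map (MulAut.conj a).toMonoidHom := by
  rw [map_map]
  congr 1
  ext x
  simp [mul_assoc]

theorem normalizer_le_normalizer_sup_of_normal (A N : Subgroup G) [hN : N.Normal] :
    normalizer (A : Set G) ≤ normalizer ((A ⊔ N : Subgroup G) : Set G) := by
  intro y hy
  have hyN : y ∈ normalizer (N : Set G) := normalizer_eq_top_iff.mpr hN ▸ mem_top y
  rw [mem_normalizer_iff_map_conj_eq] at hy hyN ⊢
  rw [map_sup, hy, hyN]

theorem relIndex_sup_of_normal_right [Finite G] (A B : Subgroup G) [B.Normal] :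
    A.relIndex (A ⊔ B) = A.relIndex B := by
  have hA := relIndex_mul_relIndex (A ⊓ B) A (A ⊔ B) inf_le_left le_sup_left
  have hB := relIndex_mul_relIndex (A ⊓ B) B (A ⊔ B) inf_le_right le_sup_right
  rw [relIndex_sup_right, inf_relIndex_right, ← inf_relIndex_left (H := A) (K := B)] at hB
  refine Nat.eq_of_mul_eq_mul_left (n := (A ⊓ B).relIndex A)
    (Nat.pos_of_ne_zero (index_ne_zero_of_finite (H := (A ⊓ B).subgroupOf A))) ?_
  rw [hA, ← hB, mul_comm]

theorem not_dvd_card_of_forall_not_dvd_orderOf [Finite G] {p : ℕ} [Fact p.Prime]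
    {B : Subgroup G} (hB : ∀ b ∈ B, ¬ p ∣ orderOf b) : ¬ p ∣ Nat.card B := fun hp => by
  obtain ⟨b, hb⟩ := exists_prime_orderOf_dvd_card' p hp
  exact hB b b.2 (by rw [orderOf_coe, hb])

theorem orderOf_mk_subgroupOf (N K : Subgroup G) [N.Normal] {x : G} (hx : x ∈ K) :
    orderOf (QuotientGroup.mk ⟨x, hx⟩ : K ⧸ N.subgroupOf K) = orderOf (x : G ⧸ N) := by
  rw [orderOf_eq_orderOf_iff]
  intro n
  rw [← QuotientGroup.mk_pow, ← QuotientGroup.mk_pow, QuotientGroup.eq_one_iff,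
    QuotientGroup.eq_one_iff, mem_subgroupOf]
  rfl

end Subgroup

theorem Sylow.exists_map_conj_le {G : Type*} [Group G] [Finite G] {p : ℕ} [Fact p.Prime]
    (T : Sylow p G) {Q : Subgroup G} (hQ : IsPGroup p Q) :
    ∃ g : G, Q.map (MulAut.conj g).toMonoidHom ≤ T := by
  obtain ⟨R, hQR⟩ := hQ.exists_le_sylow
  obtain ⟨g, rfl⟩ := MulAction.exists_smul_eq G R T
  exact ⟨g, map_mono hQR⟩

/-- `A` is a Sylow subgroup of `A ⊔ B`, since its index divides `|B|`; the `p`-subgroup `g A g⁻¹`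
of `A ⊔ B` is therefore conjugate into `A` by some `a b ∈ A ⊔ B`. -/
theorem exists_mul_mem_normalizer_of_map_conj_le_sup {G : Type*} [Group G] [Finite G] {p : ℕ}
    [Fact p.Prime] {A B : Subgroup G} [B.Normal] (hA : IsPGroup p A)
    (hB : ∀ b ∈ B, ¬ p ∣ orderOf b) {g : G} (hg : A.map (MulAut.conj g).toMonoidHom ≤ A ⊔ B) :
    ∃ b ∈ B, b * g ∈ normalizer (A : Set G) := by
  set L := A ⊔ B
  have hAL : A ≤ L := le_sup_left
  have hdvd : A.relIndex L ∣ Nat.card B :=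
    relIndex_sup_of_normal_right A B ▸ relIndex_dvd_card A B
  have hindex : ¬ p ∣ (A.subgroupOf L).index := fun h =>
    not_dvd_card_of_forall_not_dvd_orderOf hB (h.trans hdvd)
  let T : Sylow p L := (hA.of_equiv (subgroupOfEquivOfLe hAL).symm).toSylow hindex
  obtain ⟨l, hl⟩ := T.exists_map_conj_le
    ((hA.map _).of_equiv (subgroupOfEquivOfLe hg).symm)
  have hlg : A.map (MulAut.conj (l * g : G)).toMonoidHom = A := by
    have hle : (A.map (MulAut.conj g).toMonoidHom).map (MulAut.conj (l : G)).toMonoidHom ≤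
        (A.subgroupOf L).map L.subtype := by
      rw [← inf_of_le_left hg, ← subgroupOf_map_subtype, ← subtype_apply (s := L) l,
        ← map_map_conj]
      exact map_mono hl
    rw [← map_conj_mul, subgroupOf_map_subtype, inf_of_le_left hAL] at hle
    exact eq_of_le_of_card_ge hle (card_map_of_injective (MulAut.conj _).injective).ge
  obtain ⟨a, ha, b, hb, hab⟩ := mem_sup_of_normal_right.mp l.2
  refine ⟨b, hb, ?_⟩
  have hbg : b * g = a⁻¹ * (l * g) := by rw [← hab]; group
  rw [hbg]
  exact mul_mem (le_normalizer (inv_mem ha)) (mem_normalizer_iff_map_conj_eq.mpr hlg)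

section ProPQuotients

variable {G : Type*} [Group G] [TopologicalSpace G] {p : ℕ}

theorem IsProPGroup.isPGroup_map_mk {S : Subgroup G} (hS : IsProPGroup p S) (N : Subgroup G)
    [N.Normal] (hN : IsOpen (N : Set G)) : IsPGroup p (S.map (QuotientGroup.mk' N)) := by
  rintro ⟨_, x, hx, rfl⟩
  obtain ⟨n, hn⟩ := hS (N.subgroupOf S) inferInstance (hN.preimage continuous_subtype_val)
    (QuotientGroup.mk ⟨x, hx⟩)
  rw [← QuotientGroup.mk_pow, QuotientGroup.eq_one_iff, mem_subgroupOf] at hn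
  refine ⟨n, Subtype.ext ?_⟩
  show QuotientGroup.mk' N x ^ p ^ n = 1
  rw [← map_pow, QuotientGroup.mk'_apply, QuotientGroup.eq_one_iff]
  simpa using hn

theorem IsProPPrimeGroup.not_dvd_orderOf_of_mem_map_mk {K : Subgroup G}
    (hK : IsProPPrimeGroup p K) (N : Subgroup G) [N.Normal] (hN : IsOpen (N : Set G)) :
    ∀ y ∈ K.map (QuotientGroup.mk' N), ¬ p ∣ orderOf y := by
  rintro _ ⟨x, hx, rfl⟩
  have := hK (N.subgroupOf K) inferInstance (hN.preimage continuous_subtype_val)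
    (QuotientGroup.mk ⟨x, hx⟩)
  rwa [orderOf_mk_subgroupOf] at this

end ProPQuotients

section CompactGroup

variable {G : Type*} [Group G] [TopologicalSpace G] [IsTopologicalGroup G] [CompactSpace G]
  {p : ℕ} [Fact p.Prime] {S P K : Subgroup G} [K.Normal]

theorem exists_mul_mem_normalizer_sup_of_map_conj_le_sup (hS : IsProPGroup p S) (hPS : P ≤ S)
    (hK : IsProPPrimeGroup p K) {g : G} (hg : P.map (MulAut.conj g).toMonoidHom ≤ P ⊔ K)
    (N : OpenNormalSubgroup G) :
    ∃ k ∈ K, k * g ∈ normalizer ((P ⊔ N : Subgroup G) : Set G) := by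
  have : Finite (G ⧸ (N : Subgroup G)) := quotient_finite_of_isOpen _ N.isOpen'
  set π := QuotientGroup.mk' (N : Subgroup G)
  have : (K.map π).Normal := Normal.map ‹_› π (QuotientGroup.mk'_surjective _)
  have hπg : (P.map π).map (MulAut.conj (π g)).toMonoidHom ≤ P.map π ⊔ K.map π := by
    rw [← map_map_conj, ← Subgroup.map_sup]
    exact map_mono hg
  obtain ⟨_, ⟨k, hk, rfl⟩, hkg⟩ := exists_mul_mem_normalizer_of_map_conj_le_sup
    ((hS.isPGroup_map_mk N N.isOpen').to_le (map_mono hPS))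
    (hK.not_dvd_orderOf_of_mem_map_mk N N.isOpen') hπg
  refine ⟨k, hk, ?_⟩
  rwa [← map_mul, ← mem_comap, comap_normalizer_eq_of_surjective _ (QuotientGroup.mk'_surjective _),
    comap_map_eq, QuotientGroup.ker_mk'] at hkg

end CompactGroup

namespace ProfiniteGrp

variable {G : Type*} [Group G] [TopologicalSpace G] [IsTopologicalGroup G] [CompactSpace G]
  [TotallyDisconnectedSpace G]

theorem eq_one_of_mem_of_isProPGroup_of_isProPPrimeGroup {p : ℕ} [hp : Fact p.Prime]
    {S K : Subgroup G} (hS : IsProPGroup p S) (hK : IsProPPrimeGroup p K) {x : G} (hxS : x ∈ S)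
    (hxK : x ∈ K) : x = 1 := by
  by_contra hx
  obtain ⟨N, hN⟩ := exist_openNormalSubgroup_sub_open_nhds_of_one isOpen_compl_singleton
    (Ne.symm hx : (1 : G) ≠ x)
  obtain ⟨n, hn⟩ := hS.isPGroup_map_mk N N.isOpen' ⟨_, mem_map_of_mem _ hxS⟩
  have hx1 : (x : G ⧸ (N : Subgroup G)) = 1 :=
    eq_one_of_pow_prime_pow_eq_one_of_not_dvd_orderOf hp.out (congrArg Subtype.val hn)
      (hK.not_dvd_orderOf_of_mem_map_mk N N.isOpen' _ (mem_map_of_mem _ hxK))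
  exact hN ((QuotientGroup.eq_one_iff x).mp hx1) rfl

theorem mem_of_forall_mem_sup_openNormalSubgroup {P : Subgroup G} (hP : IsClosed (P : Set G))
    {x : G} (hx : ∀ N : OpenNormalSubgroup G, x ∈ P ⊔ N) : x ∈ P := by
  rw [show P = (⟨P, hP⟩ : ClosedSubgroup G) from rfl, closedSubgroup_eq_sInf_open]
  refine mem_sInf.mpr fun U ⟨hUo, hPU⟩ => ?_
  obtain ⟨N, hNU⟩ := exist_openNormalSubgroup_sub_open_nhds_of_one hUo U.one_mem
  exact sup_le hPU (fun y hy => hNU hy) (hx N)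

theorem mem_normalizer_of_forall_mem_normalizer_sup {P : Subgroup G} (hP : IsClosed (P : Set G))
    {y : G} (hy : ∀ N : OpenNormalSubgroup G, y ∈ normalizer ((P ⊔ N : Subgroup G) : Set G)) :
    y ∈ normalizer (P : Set G) := fun x =>
  ⟨fun hx => mem_of_forall_mem_sup_openNormalSubgroup hP fun N =>
      (hy N x).mp (le_sup_left (a := P) hx),
    fun hx => mem_of_forall_mem_sup_openNormalSubgroup hP fun N =>
      (hy N x).mpr (le_sup_left (a := P) hx)⟩

theorem exists_mul_mem_normalizer_of_map_conj_le_sup {p : ℕ} [Fact p.Prime] {S P K : Subgroup G}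
    [K.Normal] (hS : IsProPGroup p S) (hPS : P ≤ S)
    (hPc : IsClosed (P : Set G)) (hKc : IsClosed (K : Set G)) (hK : IsProPPrimeGroup p K) {g : G}
    (hg : P.map (MulAut.conj g).toMonoidHom ≤ P ⊔ K) :
    ∃ k ∈ K, k * g ∈ normalizer (P : Set G) := by
  let Z : OpenNormalSubgroup G → Set G := fun N =>
    (K : Set G) ∩ (· * g) ⁻¹' normalizer ((P ⊔ N : Subgroup G) : Set G)
  have hZ_closed (N : OpenNormalSubgroup G) : IsClosed (Z N) := by
    have hopen : IsOpen (normalizer ((P ⊔ N : Subgroup G) : Set G) : Set G) :=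
      isOpen_mono (le_sup_right.trans le_normalizer) N.isOpen'
    exact hKc.inter ((isClosed_of_isOpen _ hopen).preimage (continuous_mul_const g))
  have hZ_mono : Monotone Z := fun N N' hNN' =>
    Set.inter_subset_inter_right _ <| Set.preimage_mono <| by
      rw [show P ⊔ (N' : Subgroup G) = P ⊔ N ⊔ N' from
        by rw [sup_assoc, sup_eq_right.mpr (show (N : Subgroup G) ≤ N' from hNN')]]
      exact normalizer_le_normalizer_sup_of_normal _ _
  have hZ_nonempty (N : OpenNormalSubgroup G) : (Z N).Nonempty := by
    obtain ⟨k, hk, hkg⟩ := exists_mul_mem_normalizer_sup_of_map_conj_le_sup hS hPS hK hg N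
    exact ⟨k, hk, hkg⟩
  let N₀ : OpenNormalSubgroup G := ⟨⊤, show (⊤ : Subgroup G).Normal from inferInstance⟩
  obtain ⟨k, hk⟩ := IsCompact.nonempty_iInter_of_directed_nonempty_isCompact_isClosed
    (hι := ⟨N₀⟩) Z hZ_mono.directed_ge hZ_nonempty (fun N => (hZ_closed N).isCompact) hZ_closed
  rw [Set.mem_iInter] at hk
  exact ⟨k, (hk N₀).1, mem_normalizer_of_forall_mem_normalizer_sup hPc fun N => (hk N).2⟩

end ProfiniteGrp

section Normalizers

variable {G H : Type*} [Group G] [TopologicalSpace G] [IsTopologicalGroup G] [CompactSpace G]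
  [TotallyDisconnectedSpace G] [Group H] {p : ℕ} [Fact p.Prime] {S P : Subgroup G}

theorem injective_subgroupMap_of_isProPPrimeGroup_ker (hS : IsProPGroup p S) (hPS : P ≤ S)
    {φ : G →* H} (hker : IsProPPrimeGroup p φ.ker) : Function.Injective (φ.subgroupMap P) :=
  (injective_iff_map_eq_one _).mpr fun x hx => Subtype.ext <|
    ProfiniteGrp.eq_one_of_mem_of_isProPGroup_of_isProPPrimeGroup hS hker (hPS x.2)
      (congrArg Subtype.val hx)

theorem map_normalizer_eq_of_isProPPrimeGroup_ker [TopologicalSpace H] [T1Space H]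
    (hS : IsProPGroup p S) (hPS : P ≤ S) (hPc : IsClosed (P : Set G)) {φ : G →* H}
    (hφc : Continuous φ) (hφs : Function.Surjective φ) (hker : IsProPPrimeGroup p φ.ker) :
    (normalizer (P : Set G)).map φ = normalizer ((P.map φ : Subgroup H) : Set H) := by
  refine le_antisymm (le_normalizer_map φ) fun h hh => ?_
  obtain ⟨g, rfl⟩ := hφs h
  have hg : P.map (MulAut.conj g).toMonoidHom ≤ P ⊔ φ.ker := by
    rw [← comap_map_eq, ← map_le_iff_le_comap, map_map_conj]
    exact (mem_normalizer_iff_map_conj_eq.mp hh).le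
  obtain ⟨k, hk, hkg⟩ := ProfiniteGrp.exists_mul_mem_normalizer_of_map_conj_le_sup hS hPS hPc
    (isClosed_singleton.preimage hφc) hker hg
  exact ⟨k * g, hkg, by rw [map_mul, hk, one_mul]⟩

end Normalizers

section InducedMaps

variable {G H : Type*} [Group G] [Group H]

def conjMapsByNormalizer (P : Subgroup G) : Set (P → P) :=
  {α | ∃ g ∈ normalizer (P : Set G), ∀ x : P, (α x : G) = g * x * g⁻¹}

theorem bijOn_conjMapsByNormalizer {φ : G →* H} {P : Subgroup G} (e : P ≃* P.map φ)
    (he : ∀ x : P, (e x : H) = φ x)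
    (hN : normalizer ((P.map φ : Subgroup H) : Set H) ≤ (normalizer (P : Set G)).map φ) :
    Set.BijOn (fun α : P → P => e ∘ α ∘ e.symm)
      (conjMapsByNormalizer P) (conjMapsByNormalizer (P.map φ)) := by
  have hconj {g : G} {α : P → P} (hα : ∀ x : P, (α x : G) = g * x * g⁻¹) (y : P.map φ) :
      (e (α (e.symm y)) : H) = φ g * y * (φ g)⁻¹ := by
    rw [he, hα, map_mul, map_mul, map_inv, ← he, e.apply_symm_apply]
  refine ⟨?_, fun α _ α' _ h => (e.toEquiv.arrowCongr e.toEquiv).injective h, ?_⟩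
  · rintro α ⟨g, hg, hα⟩
    exact ⟨φ g, le_normalizer_map φ (mem_map_of_mem φ hg), hconj hα⟩
  · rintro β ⟨_, hh, hβ⟩
    obtain ⟨g, hg, rfl⟩ := hN hh
    let α : P → P := fun x => ⟨g * x * g⁻¹, (mem_normalizer_iff.mp hg x).mp x.2⟩
    have hα : ∀ x : P, (α x : G) = g * x * g⁻¹ := fun _ => rfl
    exact ⟨α, ⟨g, hg, hα⟩, funext fun y => Subtype.ext ((hconj hα y).trans (hβ y).symm)⟩

end InducedMaps

theorem stmt19_general {p : ℕ} [Fact p.Prime]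
    {G H : Type*} [Group G] [TopologicalSpace G] [IsTopologicalGroup G]
    [CompactSpace G] [TotallyDisconnectedSpace G]
    [Group H] [TopologicalSpace H] [T2Space H]
    (S : Subgroup G) (hSp : IsProPGroup p ↥S)
    (φ : G →* H) (hφc : Continuous φ) (hφs : Function.Surjective φ)
    (hker : IsProPPrimeGroup p ↥φ.ker)
    (P : Subgroup G) (hPS : P ≤ S) (hPc : IsClosed (P : Set G)) :
    ∃ e : ↥P ≃* ↥(P.map φ),
      (∀ x : ↥P, ((e x : H)) = φ x) ∧
      Set.BijOn (fun α : ↥P → ↥P => (e : ↥P → ↥(P.map φ)) ∘ α ∘ (e.symm : ↥(P.map φ) → ↥P))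
        {α : ↥P → ↥P | ∃ g ∈ Subgroup.normalizer (P : Set G), ∀ x : ↥P, ((α x : G)) = g * (x : G) * g⁻¹}
        {β : ↥(P.map φ) → ↥(P.map φ) | ∃ h ∈ Subgroup.normalizer ((P.map φ : Subgroup H) : Set H),
          ∀ y : ↥(P.map φ), ((β y : H)) = h * (y : H) * h⁻¹} := by
  let e : P ≃* P.map φ := MulEquiv.ofBijective (φ.subgroupMap P)
    ⟨injective_subgroupMap_of_isProPPrimeGroup_ker hSp hPS hker, φ.subgroupMap_surjective P⟩
  exact ⟨e, fun _ => rfl, bijOn_conjMapsByNormalizer e (fun _ => rfl)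
    (map_normalizer_eq_of_isProPPrimeGroup_ker hSp hPS hPc hφc hφs hker).ge⟩

/-- Let `G` be a profinite group with `p`-Sylow subgroup `S` (a maximal closed pro-`p`
subgroup), let `φ : G → H` be a continuous surjective homomorphism whose kernel is a
pro-`p'` group, let `P ≤ S` be closed and `Q = φ(P)`.  Then `φ` restricts to an isomorphism
`e : P ≃ Q`, and conjugating by `e` gives a bijection from the automorphisms of `P` induced
by `N_G(P)` onto the automorphisms of `Q` induced by `N_H(Q)`. -/
theorem stmt19 {p : ℕ} [Fact p.Prime]
    {G H : Type*} [Group G] [TopologicalSpace G] [IsTopologicalGroup G]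
    [CompactSpace G] [T2Space G] [TotallyDisconnectedSpace G]
    [Group H] [TopologicalSpace H] [IsTopologicalGroup H]
    [CompactSpace H] [T2Space H] [TotallyDisconnectedSpace H]
    (S : Subgroup G) (hSc : IsClosed (S : Set G)) (hSp : IsProPGroup p ↥S)
    (hSmax : ∀ T : Subgroup G, IsClosed (T : Set G) → IsProPGroup p ↥T → S ≤ T → T = S)
    (φ : G →* H) (hφc : Continuous φ) (hφs : Function.Surjective φ)
    (hker : IsProPPrimeGroup p ↥φ.ker)
    (P : Subgroup G) (hPS : P ≤ S) (hPc : IsClosed (P : Set G)) :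
    ∃ e : ↥P ≃* ↥(P.map φ),
      (∀ x : ↥P, ((e x : H)) = φ x) ∧
      Set.BijOn (fun α : ↥P → ↥P => (e : ↥P → ↥(P.map φ)) ∘ α ∘ (e.symm : ↥(P.map φ) → ↥P))
        {α : ↥P → ↥P | ∃ g ∈ Subgroup.normalizer (P : Set G), ∀ x : ↥P, ((α x : G)) = g * (x : G) * g⁻¹}
        {β : ↥(P.map φ) → ↥(P.map φ) | ∃ h ∈ Subgroup.normalizer ((P.map φ : Subgroup H) : Set H),
          ∀ y : ↥(P.map φ), ((β y : H)) = h * (y : H) * h⁻¹} :=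
  stmt19_general S hSp φ hφc hφs hker P hPS hPc
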